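/- arXiv:1603.04111 — 3 statements merged into one kernel-verified Lean document; each statement's English description precedes it below -/
import Mathlib

section
/- Define (a_n) by a_1 = a_2 = a_3 = 1 and for j ≥ 4, a_j ∈ {v_{j-1}, v_{j-1}+1} where v_{j-1} = (∏_{k=1}^{j-1}(a_k+1))^{j-3}. Then ξ = [0; a_1, a_2, a_3, ...] is an ultra-strong Liouville number, i.e., its convergents satisfy 0 < |ξ - p_n/q_n| < 1/q_n^n for all n ≥ 1. -/
/-! Since `q_{n+1} = a_{n+1} q_n + q_{n-1} > a_{n+1} q_n`, the classical estimate
`|ξ - p_n/q_n| ≤ 1/(q_n q_{n+1})` becomes `|ξ - p_n/q_n| < 1/(a_{n+1} q_n²)`. The recurrence also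
gives `q_n ≤ ∏_{k ≤ n} (a_k + 1)`, and the growth condition on the partial quotients says exactly
that `a_{n+1}` is at least the `(n-2)`-th power of this product, so `a_{n+1} q_n² ≥ q_n^n`.
The continued fraction does not terminate, so `ξ` is irrational and never equals a convergent. -/

open GenContFract
open GenContFract (of)

namespace GenContFract

variable {K : Type*} [Field K] [LinearOrder K] [FloorRing K] {v : K} {n : ℕ} {b : K}

theorem of_dens_succ_succ (h : (of v).partDens.get? (n + 1) = some b) :
    (of v).dens (n + 2) = b * (of v).dens (n + 1) + (of v).dens n := by
  obtain ⟨gp, hs, rfl⟩ := exists_s_b_of_partDen h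
  rw [dens_recurrence hs rfl rfl, of_partNum_eq_one (partNum_eq_s_a hs), one_mul]

variable [IsStrictOrderedRing K]

theorem one_le_of_den : 1 ≤ (of v).dens n := by
  induction n with
  | zero => exact zeroth_den_eq_one.ge
  | succ n ih => exact ih.trans of_den_mono

theorem of_dens_succ_le (h : (of v).partDens.get? n = some b) :
    (of v).dens (n + 1) ≤ (b + 1) * (of v).dens n := by
  cases n with
  | zero =>
    obtain ⟨gp, hs, rfl⟩ := exists_s_b_of_partDen h
    simp [first_den_eq hs]
  | succ n =>
    rw [of_dens_succ_succ h, add_one_mul]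
    exact add_le_add_right of_den_mono _

theorem of_dens_le_prod {b : ℕ → K} (h : ∀ k, (of v).partDens.get? k = some (b (k + 1)))
    (n : ℕ) : (of v).dens n ≤ ∏ k ∈ Finset.Icc 1 n, (b k + 1) := by
  induction n with
  | zero => simp
  | succ n ih =>
    have hb : 0 ≤ b (n + 1) + 1 := by linarith [of_one_le_get?_partDen (h n)]
    rw [Finset.prod_Icc_succ_top (by omega), mul_comm]
    exact (of_dens_succ_le (h n)).trans (mul_le_mul_of_nonneg_left ih hb)

theorem abs_sub_convs_lt (h : (of v).partDens.get? n = some b) (hn : n ≠ 0) :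
    |v - (of v).convs n| < 1 / (b * (of v).dens n ^ 2) := by
  have hnt : ¬(of v).TerminatedAt n := by simp [terminatedAt_iff_partDen_none, h]
  obtain ⟨m, rfl⟩ := Nat.exists_eq_succ_of_ne_zero hn
  have hb : 1 ≤ b := of_one_le_get?_partDen h
  have hq : 1 ≤ (of v).dens (m + 1) := one_le_of_den
  have hq' : 1 ≤ (of v).dens m := one_le_of_den
  refine (abs_sub_convs_le hnt).trans_lt (one_div_lt_one_div_of_lt (by positivity) ?_)
  rw [of_dens_succ_succ h]
  nlinarith

end GenContFract

theorem irrational_of_not_terminates {ξ : ℝ} (h : ¬(of ξ).Terminates) : Irrational ξ :=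
  fun ⟨q, hq⟩ => h ((terminates_iff_rat ξ).2 ⟨q, hq.symm⟩)

theorem Irrational.abs_sub_convs_pos {ξ : ℝ} (h : Irrational ξ) (n : ℕ) :
    0 < |ξ - (of ξ).convs n| := by
  rw [abs_pos, sub_ne_zero, Real.convs_eq_convergent]
  exact h.ne_rat _

theorem prod_add_one_pow_sub_two_le (a : ℕ → ℕ)
    (ha1 : a 1 = 1) (ha2 : a 2 = 1) (ha3 : a 3 = 1)
    (ha : ∀ j, 4 ≤ j →
      a j = (∏ k ∈ Finset.Icc 1 (j - 1), (a k + 1)) ^ (j - 3) ∨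
      a j = (∏ k ∈ Finset.Icc 1 (j - 1), (a k + 1)) ^ (j - 3) + 1) (n : ℕ) :
    (∏ k ∈ Finset.Icc 1 n, (a k + 1)) ^ (n - 2) ≤ a (n + 1) := by
  match n with
  | 0 => simp [ha1]
  | 1 => simp [ha2]
  | 2 => simp [ha3]
  | n + 3 =>
    have h := ha (n + 3 + 1) (by omega)
    rw [show n + 3 + 1 - 1 = n + 3 by omega, show n + 3 + 1 - 3 = n + 3 - 2 by omega] at h
    omega

theorem stmt_4_general (a : ℕ → ℕ)
    (ha1 : a 1 = 1) (ha2 : a 2 = 1) (ha3 : a 3 = 1)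
    (ha : ∀ j, 4 ≤ j →
      a j = (∏ k ∈ Finset.Icc 1 (j - 1), (a k + 1)) ^ (j - 3) ∨
      a j = (∏ k ∈ Finset.Icc 1 (j - 1), (a k + 1)) ^ (j - 3) + 1)
    (ξ : ℝ)
    (hξa : ∀ n : ℕ, (GenContFract.of ξ).partDens.get? n = some (a (n + 1))) :
    ∀ n : ℕ, 1 ≤ n →
      0 < |ξ - (GenContFract.of ξ).convs n| ∧
      |ξ - (GenContFract.of ξ).convs n| < 1 / ((GenContFract.of ξ).dens n) ^ n := by
  have hpartDens (k : ℕ) : (of ξ).partDens.get? k = some ((a (k + 1) : ℕ) : ℝ) := hξa k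
  have hirr : Irrational ξ := irrational_of_not_terminates fun ⟨m, hm⟩ =>
    absurd (terminatedAt_iff_partDen_none.1 hm) (by simp [hpartDens m])
  intro n hn
  set q := (of ξ).dens n
  have hq : 1 ≤ q := one_le_of_den
  have hqa : q ^ (n - 2) ≤ a (n + 1) := calc
    q ^ (n - 2) ≤ (∏ k ∈ Finset.Icc 1 n, ((a k : ℝ) + 1)) ^ (n - 2) :=
      pow_le_pow_left₀ (by positivity) (of_dens_le_prod (b := fun k => (a k : ℝ)) hpartDens n) _
    _ ≤ a (n + 1) := by exact_mod_cast prod_add_one_pow_sub_two_le a ha1 ha2 ha3 ha n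
  refine ⟨hirr.abs_sub_convs_pos n, (abs_sub_convs_lt (hpartDens n) (by omega)).trans_le ?_⟩
  apply one_div_le_one_div_of_le (by positivity)
  calc q ^ n ≤ q ^ (n - 2 + 2) := pow_le_pow_right₀ hq (by omega)
    _ = q ^ (n - 2) * q ^ 2 := pow_add _ _ _
    _ ≤ a (n + 1) * q ^ 2 := by gcongr

/-- For the sequence `a_1 = a_2 = a_3 = 1`, `a_j ∈ {v_{j-1}, v_{j-1}+1}` for `j ≥ 4` with
`v_{j-1} = (∏_{k=1}^{j-1} (a_k+1))^{j-3}`, the number `ξ = [0; a_1, a_2, a_3, …]` is an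
ultra-strong Liouville number: its convergents satisfy `0 < |ξ - p_n/q_n| < 1/q_n^n`
for all `n ≥ 1`. -/
theorem stmt_4 (a : ℕ → ℕ)
    (ha1 : a 1 = 1) (ha2 : a 2 = 1) (ha3 : a 3 = 1)
    (ha : ∀ j, 4 ≤ j →
      a j = (∏ k ∈ Finset.Icc 1 (j - 1), (a k + 1)) ^ (j - 3) ∨
      a j = (∏ k ∈ Finset.Icc 1 (j - 1), (a k + 1)) ^ (j - 3) + 1)
    (ξ : ℝ) (hξ0 : (GenContFract.of ξ).h = 0)
    (hξa : ∀ n : ℕ, (GenContFract.of ξ).partDens.get? n = some (a (n + 1))) :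
    ∀ n : ℕ, 1 ≤ n →
      0 < |ξ - (GenContFract.of ξ).convs n| ∧
      |ξ - (GenContFract.of ξ).convs n| < 1 / ((GenContFract.of ξ).dens n) ^ n :=
  stmt_4_general a ha1 ha2 ha3 ha ξ hξa
end

section
/- Let F(z) = ∑_{k≥1} α_k z^k / 10^{k!} with α_k ∈ {0,1} and α_k = 1 for infinitely many k. Then F is a transcendental function, i.e., there is no nonzero polynomial P(X,Y) with complex coefficients such that P(z, F(z)) = 0 for all z ∈ ℂ. -/
/-!
If `P(z, F(z)) = 0` with `P ≠ 0`, then for each large `z` the value `F(z)` is a root of the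
one-variable polynomial `P(z, ·)`, whose coefficients are polynomials in `z` and whose leading
coefficient stays away from `0`; Cauchy's root bound then gives `|F(z)| = O(|z|^D)` for some `D`.
On the positive reals, however, all terms of the series are nonnegative, so
`F(x) ≥ x^k / 10^{k!}` for each of the infinitely many `k` with `α_k = 1`, and `F` grows faster
than any polynomial.
-/

open Polynomial Asymptotics Filter Finset Bornology
open scoped Nat Polynomial.Bivariate

namespace Polynomial

theorem Bivariate.eval_equivMvPolynomial {R : Type*} [CommSemiring R] (p : R[X][Y]) (x y : R) :
    MvPolynomial.eval ![x, y] (equivMvPolynomial R p) = p.evalEval x y := by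
  induction p using Polynomial.induction_on' with
  | add p q hp hq => simp [hp, hq]
  | monomial n a =>
    induction a using Polynomial.induction_on' with
    | add p q hp hq => simp_all
    | monomial m b => simp [← C_mul_X_pow_eq_monomial, evalEval_C]

theorem eval_map_evalRingHom {R : Type*} [CommSemiring R] (p : R[X][Y]) (x y : R) :
    (p.map (evalRingHom x)).eval y = p.evalEval x y := by
  simpa using eval_map_apply (p := p) (f := evalRingHom x) (x := C y)

variable {K : Type*}

theorem IsRoot.norm_le_one_add_sum_norm_coeff_div [NormedDivisionRing K] {p : K[X]} (hp : p ≠ 0)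
    {a : K} (h : p.IsRoot a) :
    ‖a‖ ≤ 1 + (∑ i ∈ range p.natDegree, ‖p.coeff i‖) / ‖p.leadingCoeff‖ := by
  have hsup : (range p.natDegree).sup (‖p.coeff ·‖₊) ≤ ∑ i ∈ range p.natDegree, ‖p.coeff i‖₊ :=
    Finset.sup_le fun i hi => single_le_sum (f := (‖p.coeff ·‖₊)) (fun _ _ => zero_le) hi
  have hbound :
      cauchyBound p ≤ (∑ i ∈ range p.natDegree, ‖p.coeff i‖₊) / ‖p.leadingCoeff‖₊ + 1 := by
    unfold cauchyBound
    gcongr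
  have := NNReal.coe_le_coe.mpr ((h.norm_lt_cauchyBound hp).le.trans hbound)
  push_cast at this
  linarith

variable [NormedField K]

theorem isBigO_cobounded_pow_natDegree (p : K[X]) : p.eval =O[cobounded K] (· ^ p.natDegree) :=
  isEquivalent_cobounded_leading_monomial.isBigO.trans (isBigO_const_mul_self _ _ _)

theorem one_isBigO_cobounded_eval {p : K[X]} (hp : p ≠ 0) :
    (fun _ => (1 : K)) =O[cobounded K] p.eval := by
  have h := (isBigO_pow_pow_cobounded_of_le (R := K) (Nat.zero_le p.natDegree)).trans
    ((isBigO_refl _ _).const_mul_right (leadingCoeff_ne_zero.mpr hp))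
  simpa using h.trans isEquivalent_cobounded_leading_monomial.isBigO_symm

theorem isBigO_cobounded_pow_of_evalEval_eq_zero {f : K → K} {Q : K[X][Y]} (hQ : Q ≠ 0)
    (hf : ∀ z, Q.evalEval z (f z) = 0) :
    ∃ D : ℕ, f =O[cobounded K] (· ^ D) := by
  set n := Q.natDegree
  set D := (range n).sup fun i => (Q.coeff i).natDegree
  have hlead := one_isBigO_cobounded_eval (leadingCoeff_ne_zero.mpr hQ)
  have hcoeff : ∀ i ∈ range n, (fun z => ‖(Q.coeff i).eval z‖) =O[cobounded K] (· ^ D) :=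
    fun i hi => ((isBigO_cobounded_pow_natDegree _).trans
      (isBigO_pow_pow_cobounded_of_le (le_sup (f := fun i => (Q.coeff i).natDegree) hi))).norm_left
  have hbound : (fun z => 1 + (∑ i ∈ range n, ‖(Q.coeff i).eval z‖) / ‖Q.leadingCoeff.eval z‖)
      =O[cobounded K] (· ^ D) := by
    refine IsBigO.add ?_ ?_
    · simpa using (isBigO_pow_pow_cobounded_of_le (R := K) (Nat.zero_le D)).norm_left
    · simp_rw [div_eq_mul_inv]
      simpa using (IsBigO.fun_sum hcoeff).mul (hlead.inv_rev (by simp)).norm_left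
  refine ⟨D, (IsBigO.of_bound 1 ?_).trans hbound⟩
  filter_upwards [hlead.eq_zero_imp] with z hz
  have hlz : evalRingHom z Q.leadingCoeff ≠ 0 := fun h => one_ne_zero (hz h)
  have hlz' := leadingCoeff_map_of_leadingCoeff_ne_zero _ hlz
  have hroot : (Q.map (evalRingHom z)).IsRoot (f z) := (eval_map_evalRingHom Q z (f z)).trans (hf z)
  have := hroot.norm_le_one_add_sum_norm_coeff_div (leadingCoeff_ne_zero.mp (hlz' ▸ hlz))
  rw [natDegree_map_of_leadingCoeff_ne_zero _ hlz, hlz'] at this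
  simpa [coeff_map] using this.trans (Real.le_norm_self _)

end Polynomial

theorem summable_mul_pow_div_ten_pow_factorial {c : ℕ → ℝ} (hc0 : ∀ n, 0 ≤ c n)
    (hc1 : ∀ n, c n ≤ 1) {x : ℝ} (hx : 0 ≤ x) :
    Summable fun n => c n * x ^ n / 10 ^ n ! := by
  refine (Real.summable_pow_div_factorial x).of_nonneg_of_le (fun n => by have := hc0 n; positivity)
    fun n => div_le_div₀ (by positivity) (mul_le_of_le_one_left (by positivity) (hc1 n))
      (by positivity) ?_
  exact_mod_cast (Nat.lt_pow_self (by norm_num : 1 < 10)).le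

section LiouvilleSeries

variable {α : ℕ → ℕ} {F : ℂ → ℂ}

theorem pow_isBigO_ofReal_of_eq_one (hα : ∀ k, α k ≤ 1)
    (hF : ∀ z, F z = ∑' k : ℕ, (α (k + 1) : ℂ) * z ^ (k + 1) / 10 ^ (k + 1)!) {k : ℕ}
    (hk : α (k + 1) = 1) :
    (fun x : ℝ => x ^ (k + 1)) =O[atTop] (fun x : ℝ => F x) := by
  refine IsBigO.of_bound (10 ^ (k + 1)!) ?_
  filter_upwards [eventually_ge_atTop 0] with x hx
  set g : ℕ → ℝ := fun n => (α (n + 1) : ℝ) * x ^ (n + 1) / 10 ^ (n + 1)!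
  have hg : Summable g := (summable_nat_add_iff 1).mpr <|
    summable_mul_pow_div_ten_pow_factorial (c := fun n => α n) (fun n => by positivity)
      (fun n => by exact_mod_cast hα n) hx
  have hFx : F x = ↑(∑' n, g n) := by
    rw [hF, Complex.ofReal_tsum]
    push_cast [g]
    rfl
  have hterm : x ^ (k + 1) / 10 ^ (k + 1)! ≤ ∑' n, g n := by
    simpa [g, hk] using hg.le_tsum k fun n _ => by positivity
  rw [hFx, Complex.norm_real, Real.norm_of_nonneg (by positivity),
    Real.norm_of_nonneg (tsum_nonneg fun n => by positivity)]
  rwa [div_le_iff₀' (by positivity)] at hterm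

theorem not_isBigO_cobounded_pow (hα : ∀ k, α k ≤ 1) (hinf : {k : ℕ | α k = 1}.Infinite)
    (hF : ∀ z, F z = ∑' k : ℕ, (α (k + 1) : ℂ) * z ^ (k + 1) / 10 ^ (k + 1)!) (D : ℕ) :
    ¬F =O[cobounded ℂ] (· ^ D) := by
  intro hD
  have hFD : (fun x : ℝ => F x) =O[atTop] (fun x : ℝ => x ^ D) :=
    (hD.comp_tendsto (RCLike.tendsto_ofReal_atTop_cobounded ℂ)).trans
      (isBigO_of_le _ fun x => by simp)
  obtain ⟨k, hk, hDk⟩ := hinf.exists_gt D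
  obtain ⟨j, rfl⟩ := Nat.exists_eq_add_one_of_ne_zero (by omega : k ≠ 0)
  exact (isLittleO_pow_pow_atTop_of_lt hDk).not_isBigO
    ((eventually_gt_atTop 0).mono fun x hx => pow_ne_zero D hx.ne').frequently
    ((pow_isBigO_ofReal_of_eq_one hα hF hk).trans hFD)

end LiouvilleSeries

/-- If `F(z) = ∑_{k ≥ 1} α_k z^k / 10^{k!}` with `α_k ∈ {0,1}` and `α_k = 1` for infinitely
many `k`, then `F` is a transcendental function: no nonzero complex polynomial `P(X, Y)`
satisfies `P(z, F(z)) = 0` for all `z ∈ ℂ`. -/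
theorem stmt_10 (α : ℕ → ℕ) (hα01 : ∀ k, α k = 0 ∨ α k = 1)
    (hinf : {k : ℕ | α k = 1}.Infinite)
    (F : ℂ → ℂ)
    (hF : ∀ z, F z = ∑' k : ℕ, (α (k + 1) : ℂ) * z ^ (k + 1) / 10 ^ Nat.factorial (k + 1)) :
    ∀ P : MvPolynomial (Fin 2) ℂ, (∀ z : ℂ, MvPolynomial.eval ![z, F z] P = 0) → P = 0 := by
  intro P hP
  by_contra hP0
  set Q := (Bivariate.equivMvPolynomial ℂ).symm P
  have hQ : Q ≠ 0 := by simpa [Q] using hP0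
  have hQF : ∀ z, Q.evalEval z (F z) = 0 := fun z => by
    rw [← Bivariate.eval_equivMvPolynomial]
    simpa [Q] using hP z
  have hα : ∀ k, α k ≤ 1 := fun k => by rcases hα01 k with h | h <;> simp [h]
  obtain ⟨D, hD⟩ := isBigO_cobounded_pow_of_evalEval_eq_zero hQ hQF
  exact not_isBigO_cobounded_pow hα hinf hF D hD
end

section
/- Let ξ be a real number, N a positive integer with 10^N > |ξ|, and F(z) = ∑_{k≥1} α_k z^k / 10^{k!} with α_k ∈ {0,1} and α_k = 0 for N < k < M (where M > N). Then |F(ξ) - F_N(ξ)| ≤ 2 / 10^{M! - M·N}, where F_N(z) = ∑_{k=1}^N α_k z^k / 10^{k!}. -/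
/-!
For `k ≥ M` the `k`-th term is at most `10 ^ (N k - k!)` in absolute value, and the growth
`(M + i)! ≥ M! + M i` of the factorial makes these bounds decay at least like
`10 ^ -(M! - M N) · 10 ^ -i`. Since the terms with `N < k < M` vanish, `F(ξ) - F_N(ξ)` is this
tail, which is bounded by the geometric series `10 ^ -(M! - M N) · 10 / 9`.
-/

open Finset
open scoped Nat

theorem Nat.mul_le_factorial_of_lt {N M : ℕ} (h : N < M) : M * N ≤ M ! := by
  calc M * N ≤ M * (M - 1)! :=
        Nat.mul_le_mul_left _ ((Nat.le_sub_one_of_lt h).trans (Nat.self_le_factorial _))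
    _ = M ! := Nat.mul_factorial_pred (by omega)

theorem Nat.factorial_add_mul_le_factorial_add (M i : ℕ) : M ! + M * i ≤ (M + i)! := by
  induction i with
  | zero => simp
  | succ i ih =>
    have hpos : M + i ≤ (M + i) * (M + i)! := Nat.le_mul_of_pos_right _ (Nat.factorial_pos _)
    rw [← add_assoc, Nat.factorial_succ]
    nlinarith

theorem Nat.mul_add_add_le_factorial_of_lt {N M : ℕ} (hM : N < M) (i : ℕ) :
    N * (i + M) + (M.factorial - M * N + i) ≤ (i + M)! := by
  have hfac := Nat.factorial_add_mul_le_factorial_add M i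
  have hc := Nat.sub_add_cancel (Nat.mul_le_factorial_of_lt hM)
  have hi : (N + 1) * i ≤ M * i := Nat.mul_le_mul_right i hM
  rw [add_comm i M]
  nlinarith

theorem abs_mul_pow_div_pow_le_inv_pow {a ξ b : ℝ} {N k n e : ℕ} (ha : |a| ≤ 1) (hb : 1 ≤ b)
    (hξ : |ξ| ≤ b ^ N) (he : N * k + e ≤ n) : |a * ξ ^ k / b ^ n| ≤ (b ^ e)⁻¹ := by
  have hb₀ : 0 < b := one_pos.trans_le hb
  calc |a * ξ ^ k / b ^ n| = |a| * |ξ| ^ k / b ^ n := by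
        rw [abs_div, abs_mul, abs_pow, abs_of_pos (pow_pos hb₀ n)]
    _ ≤ 1 * (b ^ N) ^ k / b ^ (N * k + e) := by
        gcongr
    _ = (b ^ e)⁻¹ := by
        rw [one_mul, ← pow_mul, pow_add, div_mul_cancel_left₀ (pow_ne_zero _ hb₀.ne')]

theorem sum_range_succ_eq_sum_Icc_of_eq_zero {G : Type*} [AddCommMonoid G] {g : ℕ → G}
    {N M : ℕ} (hM : N < M) (hgap : ∀ k, N < k → k < M → g k = 0) :
    ∑ k ∈ range (M - 1), g (k + 1) = ∑ k ∈ Icc 1 N, g k := by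
  have hIco : ∑ k ∈ Ico 1 M, g k = ∑ k ∈ range (M - 1), g (k + 1) := by
    simp only [sum_Ico_eq_sum_range, add_comm 1]
  rw [← hIco]
  refine (sum_subset (fun k hk => ?_) fun k hk hkN => hgap k ?_ ?_).symm
  · simp only [mem_Icc, mem_Ico] at hk ⊢
    omega
  all_goals simp only [mem_Icc, mem_Ico, not_and, not_le] at hk hkN; omega

theorem stmt_11_general (ξ : ℝ) (N M : ℕ) (hM : N < M)
    (hξ : |ξ| < 10 ^ N)
    (α : ℕ → ℕ) (hα01 : ∀ k, α k = 0 ∨ α k = 1)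
    (hgap : ∀ k, N < k → k < M → α k = 0) :
    |(∑' k : ℕ, (α (k + 1) : ℝ) * ξ ^ (k + 1) / 10 ^ Nat.factorial (k + 1)) -
        ∑ k ∈ Finset.Icc 1 N, (α k : ℝ) * ξ ^ k / 10 ^ Nat.factorial k| ≤
      2 / 10 ^ (Nat.factorial M - M * N) := by
  set g : ℕ → ℝ := fun k => (α k : ℝ) * ξ ^ k / 10 ^ k.factorial
  set c := M.factorial - M * N
  have hterm (i : ℕ) : ‖g (i + M)‖ ≤ (10 ^ c)⁻¹ * (1 / 10) ^ i := by
    have hα : |(α (i + M) : ℝ)| ≤ 1 := by rcases hα01 (i + M) with h | h <;> simp [h]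
    rw [one_div, inv_pow, ← mul_inv, ← pow_add]
    exact abs_mul_pow_div_pow_le_inv_pow hα (by norm_num) hξ.le
      (Nat.mul_add_add_le_factorial_of_lt hM i)
  have hgeom : HasSum (fun i => (10 ^ c)⁻¹ * (1 / 10 : ℝ) ^ i) ((10 ^ c)⁻¹ * (1 - 1 / 10)⁻¹) :=
    (hasSum_geometric_of_lt_one (by norm_num) (by norm_num)).mul_left _
  have hsum : Summable fun k => g (k + 1) := by
    rw [← summable_nat_add_iff (M - 1)]
    simpa only [add_assoc, Nat.sub_add_cancel (Nat.one_le_of_lt hM)]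
      using hgeom.summable.of_norm_bounded hterm
  have hsplit := hsum.sum_add_tsum_nat_add (M - 1)
  simp only [add_assoc, Nat.sub_add_cancel (Nat.one_le_of_lt hM)] at hsplit
  have hfinite := sum_range_succ_eq_sum_Icc_of_eq_zero (g := g) hM
    fun k hNk hkM => by simp [g, hgap k hNk hkM]
  rw [← hsplit, hfinite, add_sub_cancel_left, ← Real.norm_eq_abs]
  calc ‖∑' i, g (i + M)‖ ≤ (10 ^ c)⁻¹ * (1 - 1 / 10)⁻¹ := tsum_of_norm_bounded hgeom hterm
    _ ≤ (10 ^ c)⁻¹ * 2 := by gcongr; norm_num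
    _ = 2 / 10 ^ c := by ring

/-- For a real `ξ`, a positive integer `N` with `10^N > |ξ|`, and
`F(z) = ∑_{k ≥ 1} α_k z^k / 10^{k!}` with `α_k ∈ {0,1}` and `α_k = 0` for `N < k < M`
(`M > N`), the truncation `F_N` satisfies `|F(ξ) - F_N(ξ)| ≤ 2 / 10^{M! - M·N}`. -/
theorem stmt_11 (ξ : ℝ) (N M : ℕ) (hN : 1 ≤ N) (hM : N < M)
    (hξ : |ξ| < 10 ^ N)
    (α : ℕ → ℕ) (hα01 : ∀ k, α k = 0 ∨ α k = 1)
    (hgap : ∀ k, N < k → k < M → α k = 0) :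
    |(∑' k : ℕ, (α (k + 1) : ℝ) * ξ ^ (k + 1) / 10 ^ Nat.factorial (k + 1)) -
        ∑ k ∈ Finset.Icc 1 N, (α k : ℝ) * ξ ^ k / 10 ^ Nat.factorial k| ≤
      2 / 10 ^ (Nat.factorial M - M * N) :=
  stmt_11_general ξ N M hM hξ α hα01 hgap
end
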